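/- Progress for the target language: if the empty context types a closed target term M at type T, then either M is a value, or there exists M' such that M steps to M', or M equals matchfail. -/

import Mathlib

set_option linter.unusedVariables false

/-! ## Target language -/

inductive Tag | plus | plus1 | plus2
deriving DecidableEq

inductive TTy
| unit
| arr (T₁ T₂ : TTy)
| sum (φ : Tag) (T₁ T₂ : TTy)
deriving DecidableEq

inductive Tm
| var (n : Nat)
| unit
| lam (T : TTy) (b : Tm)
| app (f a : Tm)
| inj (i : Bool) (m : Tm)          -- inj true = inj₁, inj false = inj₂
| case2 (m b₁ b₂ : Tm)
| case1 (i : Bool) (m b : Tm)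
| cast (φ₁ φ₂ : Tag) (m : Tm)
| matchfail
deriving DecidableEq

namespace Tm

def shift (d c : Nat) : Tm → Tm
| var n => var (if n < c then n else n + d)
| unit => unit
| lam T b => lam T (shift d (c+1) b)
| app f a => app (shift d c f) (shift d c a)
| inj i m => inj i (shift d c m)
| case2 m b₁ b₂ => case2 (shift d c m) (shift d (c+1) b₁) (shift d (c+1) b₂)
| case1 i m b => case1 i (shift d c m) (shift d (c+1) b)
| cast φ₁ φ₂ m => cast φ₁ φ₂ (shift d c m)
| matchfail => matchfail

def subst : Tm → Nat → Tm → Tm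
| var n, k, s => if n = k then s else if k < n then var (n-1) else var n
| unit, _, _ => unit
| lam T b, k, s => lam T (subst b (k+1) (shift 1 0 s))
| app f a, k, s => app (subst f k s) (subst a k s)
| inj i m, k, s => inj i (subst m k s)
| case2 m b₁ b₂, k, s =>
    case2 (subst m k s) (subst b₁ (k+1) (shift 1 0 s)) (subst b₂ (k+1) (shift 1 0 s))
| case1 i m b, k, s => case1 i (subst m k s) (subst b (k+1) (shift 1 0 s))
| cast φ₁ φ₂ m, k, s => cast φ₁ φ₂ (subst m k s)
| matchfail, _, _ => matchfail

def subst0 (b s : Tm) : Tm := subst b 0 s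

/-- no cast subterm -/
def castFree : Tm → Prop
| var _ => True
| unit => True
| lam _ b => castFree b
| app f a => castFree f ∧ castFree a
| inj _ m => castFree m
| case2 m b₁ b₂ => castFree m ∧ castFree b₁ ∧ castFree b₂
| case1 _ m b => castFree m ∧ castFree b
| cast _ _ _ => False
| matchfail => True

/-- no matchfail subterm -/
def mfFree : Tm → Prop
| var _ => True
| unit => True
| lam _ b => mfFree b
| app f a => mfFree f ∧ mfFree a
| inj _ m => mfFree m
| case2 m b₁ b₂ => mfFree m ∧ mfFree b₁ ∧ mfFree b₂
| case1 _ m b => mfFree m ∧ mfFree b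
| cast _ _ m => mfFree m
| matchfail => False

end Tm

inductive Value : Tm → Prop
| unit : Value .unit
| lam : ∀ T b, Value (.lam T b)
| inj : ∀ i m, Value m → Value (.inj i m)

/-- the injection tag `i` is compatible with sum constructor `φ` -/
def tagOk (i : Bool) (φ : Tag) : Prop :=
  φ = Tag.plus ∨ φ = (if i then Tag.plus1 else Tag.plus2)

instance (i : Bool) (φ : Tag) : Decidable (tagOk i φ) := by
  unfold tagOk; infer_instance

/-! ### Target typing -/

inductive Typed : List TTy → Tm → TTy → Prop
| var : ∀ {Γ n T}, Γ[n]? = some T → Typed Γ (.var n) T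
| unit : ∀ {Γ}, Typed Γ .unit .unit
| lam : ∀ {Γ T₁ T₂ b}, Typed (T₁ :: Γ) b T₂ → Typed Γ (.lam T₁ b) (.arr T₁ T₂)
| app : ∀ {Γ f a T₁ T₂}, Typed Γ f (.arr T₁ T₂) → Typed Γ a T₁ → Typed Γ (.app f a) T₂
| inj : ∀ {Γ i m T₁ T₂ φ}, Typed Γ m (if i then T₁ else T₂) → tagOk i φ →
    Typed Γ (.inj i m) (.sum φ T₁ T₂)
| case2 : ∀ {Γ m b₁ b₂ φ T₁ T₂ T}, Typed Γ m (.sum φ T₁ T₂) →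
    Typed (T₁ :: Γ) b₁ T → Typed (T₂ :: Γ) b₂ T → Typed Γ (.case2 m b₁ b₂) T
| case1 : ∀ {Γ i m b T₁ T₂ T}, Typed Γ m (.sum (if i then Tag.plus1 else Tag.plus2) T₁ T₂) →
    Typed ((if i then T₁ else T₂) :: Γ) b T → Typed Γ (.case1 i m b) T
| cast : ∀ {Γ φ₁ φ₂ m T₁ T₂}, Typed Γ m (.sum φ₁ T₁ T₂) →
    Typed Γ (.cast φ₁ φ₂ m) (.sum φ₂ T₁ T₂)
| matchfail : ∀ {Γ T}, Typed Γ .matchfail T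

/-! ### Target operational semantics (call-by-value) -/

inductive Step : Tm → Tm → Prop
| beta : ∀ {T b v}, Value v → Step (.app (.lam T b) v) (b.subst0 v)
| app1 : ∀ {m m' n}, Step m m' → Step (.app m n) (.app m' n)
| app2 : ∀ {v n n'}, Value v → Step n n' → Step (.app v n) (.app v n')
| injC : ∀ {i m m'}, Step m m' → Step (.inj i m) (.inj i m')
| case2C : ∀ {m m' b₁ b₂}, Step m m' → Step (.case2 m b₁ b₂) (.case2 m' b₁ b₂)
| case1C : ∀ {i m m' b}, Step m m' → Step (.case1 i m b) (.case1 i m' b)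
| castC : ∀ {φ₁ φ₂ m m'}, Step m m' → Step (.cast φ₁ φ₂ m) (.cast φ₁ φ₂ m')
| case2R : ∀ {i v b₁ b₂}, Value v →
    Step (.case2 (.inj i v) b₁ b₂) ((if i then b₁ else b₂).subst0 v)
| case1R : ∀ {i v b}, Value v → Step (.case1 i (.inj i v) b) (b.subst0 v)
| castOk : ∀ {φ₁ φ₂ i v}, Value v → tagOk i φ₂ →
    Step (.cast φ₁ φ₂ (.inj i v)) (.inj i v)
| castFail : ∀ {φ₁ φ₂ i v}, Value v → ¬ tagOk i φ₂ →
    Step (.cast φ₁ φ₂ (.inj i v)) .matchfail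
| mfApp1 : ∀ {n}, Step (.app .matchfail n) .matchfail
| mfApp2 : ∀ {v}, Value v → Step (.app v .matchfail) .matchfail
| mfInj : ∀ {i}, Step (.inj i .matchfail) .matchfail
| mfCase2 : ∀ {b₁ b₂}, Step (.case2 .matchfail b₁ b₂) .matchfail
| mfCase1 : ∀ {i b}, Step (.case1 i .matchfail b) .matchfail
| mfCast : ∀ {φ₁ φ₂}, Step (.cast φ₁ φ₂ .matchfail) .matchfail

/-- multi-step evaluation -/
def Steps : Tm → Tm → Prop := Relation.ReflTransGen Step

def Converges (M : Tm) : Prop := ∃ W, Steps M W ∧ Value W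

/-! ### Cast classification and target precision -/

def SafeCast (φ₁ φ₂ : Tag) : Prop := φ₂ = Tag.plus
def BackCast (φ₁ φ₂ : Tag) : Prop :=
  φ₁ = Tag.plus ∧ (φ₂ = Tag.plus1 ∨ φ₂ = Tag.plus2)
def MatchCast (φ₁ φ₂ : Tag) : Prop :=
  (φ₁ = Tag.plus1 ∧ φ₂ = Tag.plus2) ∨ (φ₁ = Tag.plus2 ∧ φ₂ = Tag.plus1)

/-- precision between casts: `⟨φ₁' ⇒ φ₂'⟩ ⊑ ⟨φ₁ ⇒ φ₂⟩` -/
inductive CastPrec : Tag → Tag → Tag → Tag → Prop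
| refl : ∀ {φ₁ φ₂}, CastPrec φ₁ φ₂ φ₁ φ₂
| mcBc : ∀ {a b c d}, MatchCast a b → BackCast c d → CastPrec a b c d
| bcSc : ∀ {a b c d}, BackCast a b → SafeCast c d → CastPrec a b c d
| mcSc : ∀ {a b c d}, MatchCast a b → SafeCast c d → CastPrec a b c d
| scSc : ∀ {φ}, CastPrec Tag.plus Tag.plus φ Tag.plus

/-- target term precision `M' ⊑ M` -/
inductive TPrec : Tm → Tm → Prop
| var : ∀ {n}, TPrec (.var n) (.var n)
| unit : TPrec .unit .unit
| lam : ∀ {T' T b' b}, TPrec b' b → TPrec (.lam T' b') (.lam T b)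
| app : ∀ {f' f a' a}, TPrec f' f → TPrec a' a → TPrec (.app f' a') (.app f a)
| inj : ∀ {i m' m}, TPrec m' m → TPrec (.inj i m') (.inj i m)
| case2 : ∀ {m' m b₁' b₁ b₂' b₂}, TPrec m' m → TPrec b₁' b₁ → TPrec b₂' b₂ →
    TPrec (.case2 m' b₁' b₂') (.case2 m b₁ b₂)
| case1 : ∀ {i m' m b' b}, TPrec m' m → TPrec b' b →
    TPrec (.case1 i m' b') (.case1 i m b)
| case1case2 : ∀ {i m' m b' b₁ b₂}, TPrec m' m → TPrec b' (if i then b₁ else b₂) →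
    TPrec (.case1 i m' b') (.case2 m b₁ b₂)
| matchfail : ∀ {m}, TPrec .matchfail m
| cast : ∀ {φ₁' φ₂' φ₁ φ₂ m' m}, CastPrec φ₁' φ₂' φ₁ φ₂ → TPrec m' m →
    TPrec (.cast φ₁' φ₂' m') (.cast φ₁ φ₂ m)
| castL : ∀ {φ₁ φ₂ m' m}, TPrec m' m → TPrec (.cast φ₁ φ₂ m') m

/-! ## Source language -/

inductive SCons | plus | plus1 | plus2 | plusQ | plusQ1 | plusQ2
deriving DecidableEq

inductive STy
| unit
| arr (A B : STy)
| sum (s : SCons) (A B : STy)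
deriving DecidableEq

/-- translation of sum constructors -/
def SCons.trans : SCons → Tag
| .plus => .plus | .plusQ => .plus
| .plus1 => .plus1 | .plusQ1 => .plus1
| .plus2 => .plus2 | .plusQ2 => .plus2

/-- type translation ⟦·⟧ -/
def STy.trans : STy → TTy
| .unit => .unit
| .arr A B => .arr A.trans B.trans
| .sum s A B => .sum s.trans A.trans B.trans

inductive SExp
| var (n : Nat)
| unit
| lam (A : STy) (b : SExp)
| app (f a : SExp)
| inj (i : Bool) (e : SExp)
| case2 (e b₁ b₂ : SExp)
| case1 (i : Bool) (e b : SExp)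
| anno (e : SExp) (A : STy)
deriving DecidableEq

/-! ### Source precision (more static = more precise) -/

inductive SConsPrec : SCons → SCons → Prop
| refl : ∀ {s}, SConsPrec s s
| pQ : SConsPrec .plus .plusQ
| p1Q1 : SConsPrec .plus1 .plusQ1
| p2Q2 : SConsPrec .plus2 .plusQ2
| p1Q : SConsPrec .plus1 .plusQ
| p2Q : SConsPrec .plus2 .plusQ
| q1Q : SConsPrec .plusQ1 .plusQ
| q2Q : SConsPrec .plusQ2 .plusQ

inductive SPrec : STy → STy → Prop
| unit : SPrec .unit .unit
| arr : ∀ {A' A B' B}, SPrec A' A → SPrec B' B → SPrec (.arr A' B') (.arr A B)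
| sum : ∀ {s' s A' A B' B}, SConsPrec s' s → SPrec A' A → SPrec B' B →
    SPrec (.sum s' A' B') (.sum s A B)

inductive EPrec : SExp → SExp → Prop
| var : ∀ {n}, EPrec (.var n) (.var n)
| unit : EPrec .unit .unit
| lam : ∀ {A' A b' b}, SPrec A' A → EPrec b' b → EPrec (.lam A' b') (.lam A b)
| app : ∀ {f' f a' a}, EPrec f' f → EPrec a' a → EPrec (.app f' a') (.app f a)
| inj : ∀ {i e' e}, EPrec e' e → EPrec (.inj i e') (.inj i e)
| case2 : ∀ {e' e b₁' b₁ b₂' b₂}, EPrec e' e → EPrec b₁' b₁ → EPrec b₂' b₂ →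
    EPrec (.case2 e' b₁' b₂') (.case2 e b₁ b₂)
| case1 : ∀ {i e' e b' b}, EPrec e' e → EPrec b' b → EPrec (.case1 i e' b') (.case1 i e b)
| anno : ∀ {e' e A' A}, EPrec e' e → SPrec A' A → EPrec (.anno e' A') (.anno e A)

def CtxPrec (Γ' Γ : List STy) : Prop := List.Forall₂ SPrec Γ' Γ

/-! ### Directed consistency -/

inductive SConsDir : SCons → SCons → Prop
| refl : ∀ {s}, SConsDir s s
| toQ : ∀ {s}, SConsDir s .plusQ
| fromQ : ∀ {s}, SConsDir .plusQ s
| oneLs : SConsDir .plus1 .plus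
| oneRs : SConsDir .plus2 .plus
| oneLq : SConsDir .plusQ1 .plus
| oneRq : SConsDir .plusQ2 .plus
| q1p1 : SConsDir .plusQ1 .plus1
| p1q1 : SConsDir .plus1 .plusQ1
| q2p2 : SConsDir .plusQ2 .plus2
| p2q2 : SConsDir .plus2 .plusQ2

inductive DCons : STy → STy → Prop
| unit : DCons .unit .unit
| arr : ∀ {A₁ A₁' A₂ A₂'}, DCons A₁ A₁' → DCons A₂' A₂ →
    DCons (.arr A₁' A₂') (.arr A₁ A₂)
| sum : ∀ {s' s A₁' A₁ A₂' A₂}, SConsDir s' s → DCons A₁' A₁ → DCons A₂' A₂ →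
    DCons (.sum s' A₁' A₂') (.sum s A₁ A₂)

/-! ### Bidirectional typing -/

mutual
inductive Chk : List STy → SExp → STy → Prop
| unit : ∀ {Γ}, Chk Γ .unit .unit
| lam : ∀ {Γ A B b}, Chk (A :: Γ) b B → Chk Γ (.lam A b) (.arr A B)
| inj1 : ∀ {Γ e A₁ A₂}, Chk Γ e A₁ → Chk Γ (.inj true e) (.sum .plusQ1 A₁ A₂)
| inj2 : ∀ {Γ e A₁ A₂}, Chk Γ e A₂ → Chk Γ (.inj false e) (.sum .plusQ2 A₁ A₂)
| case2 : ∀ {Γ e b₁ b₂ s A₁ A₂ C}, Syn Γ e (.sum s A₁ A₂) →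
    Chk (A₁ :: Γ) b₁ C → Chk (A₂ :: Γ) b₂ C → Chk Γ (.case2 e b₁ b₂) C
| case1 : ∀ {Γ i e b s A₁ A₂ C}, Syn Γ e (.sum s A₁ A₂) →
    s = (if i then SCons.plus1 else SCons.plus2) →
    Chk ((if i then A₁ else A₂) :: Γ) b C → Chk Γ (.case1 i e b) C
| sub : ∀ {Γ e A B}, Syn Γ e A → DCons A B → Chk Γ e B

inductive Syn : List STy → SExp → STy → Prop
| var : ∀ {Γ n A}, Γ[n]? = some A → Syn Γ (.var n) A
| anno : ∀ {Γ e A}, Chk Γ e A → Syn Γ (.anno e A) A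
| app : ∀ {Γ f a A B}, Syn Γ f (.arr A B) → Chk Γ a A → Syn Γ (.app f a) B
end

/-! ### Type assignment -/

inductive SAssign : List STy → SExp → STy → Prop
| var : ∀ {Γ n A}, Γ[n]? = some A → SAssign Γ (.var n) A
| unit : ∀ {Γ}, SAssign Γ .unit .unit
| lam : ∀ {Γ A B b}, SAssign (A :: Γ) b B → SAssign Γ (.lam A b) (.arr A B)
| app : ∀ {Γ f a A B}, SAssign Γ f (.arr A B) → SAssign Γ a A → SAssign Γ (.app f a) B
| inj1 : ∀ {Γ e A₁ A₂}, SAssign Γ e A₁ → SAssign Γ (.inj true e) (.sum .plusQ1 A₁ A₂)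
| inj2 : ∀ {Γ e A₁ A₂}, SAssign Γ e A₂ → SAssign Γ (.inj false e) (.sum .plusQ2 A₁ A₂)
| case2 : ∀ {Γ e b₁ b₂ s A₁ A₂ C}, SAssign Γ e (.sum s A₁ A₂) →
    SAssign (A₁ :: Γ) b₁ C → SAssign (A₂ :: Γ) b₂ C → SAssign Γ (.case2 e b₁ b₂) C
| case1 : ∀ {Γ i e b s A₁ A₂ C}, SAssign Γ e (.sum s A₁ A₂) →
    s = (if i then SCons.plus1 else SCons.plus2) →
    SAssign ((if i then A₁ else A₂) :: Γ) b C → SAssign Γ (.case1 i e b) C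
| anno : ∀ {Γ e A}, SAssign Γ e A → SAssign Γ (.anno e A) A
| sub : ∀ {Γ e A B}, SAssign Γ e A → DCons A B → SAssign Γ e B

/-! ### Coercion generation -/

inductive Coerce : STy → STy → (Tm → Tm) → Prop
| unit : Coerce .unit .unit id
| arr : ∀ {A₁ A₁' A₂ A₂' C₁ C₂}, Coerce A₁ A₁' C₁ → Coerce A₂' A₂ C₂ →
    Coerce (.arr A₁' A₂') (.arr A₁ A₂)
      (fun M => .lam A₁.trans (C₂ (.app (M.shift 1 0) (C₁ (.var 0)))))
| oneL : ∀ {s' s A₁' A₁ A₂' A₂ C₁}, (s' = .plus1 ∨ s' = .plusQ1) → SConsDir s' s →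
    Coerce A₁' A₁ C₁ →
    Coerce (.sum s' A₁' A₂') (.sum s A₁ A₂)
      (fun M => .cast s'.trans s.trans (.case1 true M (.inj true (C₁ (.var 0)))))
| oneR : ∀ {s' s A₁' A₁ A₂' A₂ C₂}, (s' = .plus2 ∨ s' = .plusQ2) → SConsDir s' s →
    Coerce A₂' A₂ C₂ →
    Coerce (.sum s' A₁' A₂') (.sum s A₁ A₂)
      (fun M => .cast s'.trans s.trans (.case1 false M (.inj false (C₂ (.var 0)))))
| two : ∀ {s' s A₁' A₁ A₂' A₂ C₁ C₂}, (s' = .plus ∨ s' = .plusQ) → SConsDir s' s →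
    Coerce A₁' A₁ C₁ → Coerce A₂' A₂ C₂ →
    Coerce (.sum s' A₁' A₂') (.sum s A₁ A₂)
      (fun M => .cast s'.trans s.trans
        (.case2 M (.cast .plus1 s'.trans (.inj true (C₁ (.var 0))))
                  (.cast .plus2 s'.trans (.inj false (C₂ (.var 0))))))

/-! ### Type-directed translation -/

inductive Translate : List STy → SExp → STy → Tm → Prop
| var : ∀ {Γ n A}, Γ[n]? = some A → Translate Γ (.var n) A (.var n)
| unit : ∀ {Γ}, Translate Γ .unit .unit .unit
| lam : ∀ {Γ A B b M}, Translate (A :: Γ) b B M → Translate Γ (.lam A b) (.arr A B) (.lam A.trans M)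
| app : ∀ {Γ f a A B Mf Ma}, Translate Γ f (.arr A B) Mf → Translate Γ a A Ma →
    Translate Γ (.app f a) B (.app Mf Ma)
| inj1 : ∀ {Γ e A₁ A₂ M}, Translate Γ e A₁ M →
    Translate Γ (.inj true e) (.sum .plusQ1 A₁ A₂) (.inj true M)
| inj2 : ∀ {Γ e A₁ A₂ M}, Translate Γ e A₂ M →
    Translate Γ (.inj false e) (.sum .plusQ2 A₁ A₂) (.inj false M)
| case2 : ∀ {Γ e b₁ b₂ s A₁ A₂ C Me M₁ M₂}, Translate Γ e (.sum s A₁ A₂) Me →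
    Translate (A₁ :: Γ) b₁ C M₁ → Translate (A₂ :: Γ) b₂ C M₂ →
    Translate Γ (.case2 e b₁ b₂) C (.case2 Me M₁ M₂)
| case1 : ∀ {Γ i e b s A₁ A₂ C Me Mb}, Translate Γ e (.sum s A₁ A₂) Me →
    s = (if i then SCons.plus1 else SCons.plus2) →
    Translate ((if i then A₁ else A₂) :: Γ) b C Mb →
    Translate Γ (.case1 i e b) C (.case1 i Me Mb)
| anno : ∀ {Γ e A M}, Translate Γ e A M → Translate Γ (.anno e A) A M
| sub : ∀ {Γ e A B M C}, Translate Γ e A M → DCons A B → Coerce A B C → Translate Γ e B (C M)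

/-! ### Static source programs -/

def SCons.isStatic : SCons → Prop := (· = SCons.plus)

def STy.isStatic : STy → Prop
| .unit => True
| .arr A B => A.isStatic ∧ B.isStatic
| .sum s A B => s.isStatic ∧ A.isStatic ∧ B.isStatic

def SExp.isStatic : SExp → Prop
| .var _ => True
| .unit => True
| .lam A b => A.isStatic ∧ b.isStatic
| .app f a => f.isStatic ∧ a.isStatic
| .inj _ e => e.isStatic
| .case2 e b₁ b₂ => e.isStatic ∧ b₁.isStatic ∧ b₂.isStatic
| .case1 _ e b => e.isStatic ∧ b.isStatic
| .anno e A => e.isStatic ∧ A.isStatic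

def staticCtx (Γ : List STy) : Prop := ∀ A ∈ Γ, A.isStatic

/-! Induction on the typing derivation. An elimination form whose evaluation position makes
progress steps by the congruence rule or propagates `matchfail`; once that position holds a
value, canonical forms make the term a redex, and the typing of a one-armed case forces the
injection to carry the matching tag. -/

theorem tagOk_ite_iff {i j : Bool} :
    tagOk j (if i then Tag.plus1 else Tag.plus2) ↔ j = i := by
  cases i <;> cases j <;> simp [tagOk]

namespace Value

theorem eq_lam_of_typed_arr {Γ : List TTy} {v : Tm} {T₁ T₂ : TTy} (hv : Value v)
    (h : Typed Γ v (.arr T₁ T₂)) : ∃ b, v = .lam T₁ b := by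
  cases hv <;> cases h
  exact ⟨_, rfl⟩

theorem eq_inj_of_typed_sum {Γ : List TTy} {v : Tm} {φ : Tag} {T₁ T₂ : TTy} (hv : Value v)
    (h : Typed Γ v (.sum φ T₁ T₂)) : ∃ i m, v = .inj i m ∧ Value m ∧ tagOk i φ := by
  cases hv <;> cases h
  exact ⟨_, _, rfl, ‹_›, ‹_›⟩

end Value

theorem Step.exists_of_evalPos {E : Tm → Tm} {m : Tm}
    (congr : ∀ {m m'}, Step m m' → Step (E m) (E m'))
    (fail : Step (E .matchfail) .matchfail)
    (redex : Value m → ∃ M', Step (E m) M')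
    (hm : Value m ∨ (∃ m', Step m m') ∨ m = .matchfail) : ∃ M', Step (E m) M' := by
  rcases hm with hv | ⟨m', hs⟩ | rfl
  · exact redex hv
  · exact ⟨_, congr hs⟩
  · exact ⟨_, fail⟩

/-- Progress for the target language. -/
theorem target_progress {M : Tm} {T : TTy} (hty : Typed [] M T) :
    Value M ∨ (∃ M', Step M M') ∨ M = .matchfail := by
  generalize hΓ : ([] : List TTy) = Γ at hty
  induction hty with subst hΓ
  | var h => simp at h
  | unit => exact .inl .unit
  | lam _ => exact .inl (.lam _ _)
  | matchfail => exact .inr (.inr rfl)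
  | inj _ _ ih =>
    rcases ih rfl with hv | ⟨m', hs⟩ | rfl
    · exact .inl (.inj _ _ hv)
    · exact .inr (.inl ⟨_, .injC hs⟩)
    · exact .inr (.inl ⟨_, .mfInj⟩)
  | app hf _ ihf iha =>
    right; left
    refine Step.exists_of_evalPos (E := (.app · _)) .app1 .mfApp1 (fun hvf => ?_) (ihf rfl)
    refine Step.exists_of_evalPos (E := .app _) (.app2 hvf) (.mfApp2 hvf) (fun hva => ?_) (iha rfl)
    obtain ⟨b, rfl⟩ := hvf.eq_lam_of_typed_arr hf
    exact ⟨_, .beta hva⟩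
  | case2 hm _ _ ihm =>
    right; left
    refine Step.exists_of_evalPos (E := (.case2 · _ _)) .case2C .mfCase2 (fun hv => ?_) (ihm rfl)
    obtain ⟨i, m, rfl, hvm, -⟩ := hv.eq_inj_of_typed_sum hm
    exact ⟨_, .case2R hvm⟩
  | case1 hm _ ihm =>
    right; left
    refine Step.exists_of_evalPos (E := (.case1 _ · _)) .case1C .mfCase1 (fun hv => ?_) (ihm rfl)
    obtain ⟨j, m, rfl, hvm, hok⟩ := hv.eq_inj_of_typed_sum hm
    obtain rfl := tagOk_ite_iff.mp hok
    exact ⟨_, .case1R hvm⟩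
  | @cast _ _ φ₂ _ _ _ hm ihm =>
    right; left
    refine Step.exists_of_evalPos (E := .cast _ _) .castC .mfCast (fun hv => ?_) (ihm rfl)
    obtain ⟨i, m, rfl, hvm, -⟩ := hv.eq_inj_of_typed_sum hm
    by_cases hok : tagOk i φ₂
    · exact ⟨_, .castOk hvm hok⟩
    · exact ⟨_, .castFail hvm hok⟩
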